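/- Let J ⊆ I ⊊ R be ideals of a Noetherian commutative ring R such that the image of I in R/J contains a regular element of R/J. Then the Valabrega–Valla module 𝒱𝒱_{J⊆I} equals the zeroth local cohomology H⁰_{I/J}(𝒜) of the Aluffi algebra 𝒜 = 𝒜_{R↠R/J}(I/J) with respect to the ideal I/J, i.e., 𝒱𝒱_{J⊆I} = {x ∈ 𝒜 : (I/J)^n · x = 0 for some n ≥ 0}. In particular, there exists an integer k ≥ 0 such that I^k·(J ∩ I^t) ⊆ J·I^{t-1} for every t ≥ 1. -/

import Mathlib

open Polynomial

variable {R : Type*} [CommRing R]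

/-- The defining ideal `(J, J̃)·Rees_R(I)` of the Aluffi algebra inside the Rees algebra. -/
noncomputable def aluffiIdeal (I J : Ideal R) : Ideal (reesAlgebra I) :=
  Ideal.span {x : reesAlgebra I | ∃ a ∈ J, (x : R[X]) = C a ∨ (x : R[X]) = C a * X}

/-- The (R-embedded) Aluffi algebra of `I/J`, presented as `Rees_R(I)/(J, J̃)Rees_R(I)`. -/
noncomputable abbrev AluffiAlgebra (I J : Ideal R) :=
  reesAlgebra I ⧸ aluffiIdeal I J

/-- The extended–contracted ideal `𝔭̃ = 𝔭R[u] ∩ Rees_R(I) = ⊕_{t≥0} (𝔭 ∩ I^t)u^t` of an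
ideal `𝔭 ⊆ R` inside the Rees algebra of `I`. -/
noncomputable def tildeIdeal (I p : Ideal R) : Ideal (reesAlgebra I) :=
  Ideal.comap ((reesAlgebra I).val.toRingHom) (p.map (Polynomial.C : R →+* R[X]))

/-!
Write `J̃ = ⊕ (J ∩ I^t) u^t` and `(J, J̃) = J ⊕ ⊕_{t ≥ 1} J·I^{t-1} u^t` inside `Rees_R(I)`, so that
the Valabrega–Valla module is `J̃ / (J, J̃)`. By Artin–Rees, `I^k (J ∩ I^t) ⊆ J·I^t ⊆ J·I^{t-1}`
for some `k`, so `I^k` maps `J̃` into `(J, J̃)`. Conversely, if `b ∈ I` is regular modulo `J` and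
`b^n x ∈ (J, J̃) ⊆ J̃`, then every coefficient of `x` lies in `J`, i.e. `x ∈ J̃`.
-/

-- A form of the Artin–Rees lemma.
lemma Ideal.exists_pow_mul_inf_pow_le_mul_pow [IsNoetherianRing R] (I J : Ideal R) :
    ∃ k : ℕ, ∀ t : ℕ, I ^ k * (J ⊓ I ^ t) ≤ J * I ^ t := by
  obtain ⟨k, hk⟩ := Ideal.exists_pow_inf_eq_pow_smul I (J : Submodule R R)
  simp only [smul_eq_mul, Ideal.mul_top] at hk
  refine ⟨k, fun t => ?_⟩
  calc I ^ k * (J ⊓ I ^ t) ≤ I ^ (k + t) ⊓ J := by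
        rw [pow_add]
        exact le_inf (Ideal.mul_mono_right inf_le_right)
          (Ideal.mul_le_right.trans inf_le_left)
    _ = I ^ t * (I ^ k ⊓ J) := by rw [hk (k + t) (Nat.le_add_right k t), Nat.add_sub_cancel_left]
    _ ≤ J * I ^ t := mul_comm (I ^ t) J ▸ Ideal.mul_mono_right inf_le_right

section

variable {I J : Ideal R}

lemma mem_tildeIdeal_iff {p : Ideal R} {y : reesAlgebra I} :
    y ∈ tildeIdeal I p ↔ ∀ n, (y : R[X]).coeff n ∈ p := by
  simp [tildeIdeal, Ideal.mem_comap, Ideal.mem_map_C_iff]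

lemma coeff_algebraMap_mul (a : R) (y : reesAlgebra I) (n : ℕ) :
    ((algebraMap R (reesAlgebra I) a * y : reesAlgebra I) : R[X]).coeff n =
      a * (y : R[X]).coeff n :=
  coeff_C_mul (y : R[X])

lemma aluffiIdeal_le_tildeIdeal : aluffiIdeal I J ≤ tildeIdeal I J := by
  rw [aluffiIdeal, Ideal.span_le]
  rintro x ⟨a, ha, hx | hx⟩ <;> rw [SetLike.mem_coe, mem_tildeIdeal_iff, hx] <;> intro n
  · rw [coeff_C]; split_ifs <;> simp [ha]
  · rw [coeff_C_mul_X]; split_ifs <;> simp [ha]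

noncomputable def aluffiSubmodule (I J : Ideal R) : Submodule R R[X] :=
  ((aluffiIdeal I J).restrictScalars R).map (reesAlgebra I).val.toLinearMap

lemma coe_mem_aluffiSubmodule_iff {w : reesAlgebra I} :
    (w : R[X]) ∈ aluffiSubmodule I J ↔ w ∈ aluffiIdeal I J := by
  refine ⟨?_, fun hw => ⟨w, hw, rfl⟩⟩
  rintro ⟨v, hv, hvw⟩
  rwa [← Subtype.ext hvw]

lemma C_mem_aluffiSubmodule {a : R} (ha : a ∈ J) : C a ∈ aluffiSubmodule I J :=
  ⟨algebraMap R (reesAlgebra I) a, Ideal.subset_span ⟨a, ha, Or.inl rfl⟩, rfl⟩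

lemma monomial_succ_mem_aluffiSubmodule (hJI : J ≤ I) {t : ℕ} {c : R} (hc : c ∈ J * I ^ t) :
    monomial (t + 1) c ∈ aluffiSubmodule I J := by
  refine Submodule.mul_induction_on hc (fun j hj m hm => ?_) (fun x y hx hy => ?_)
  · have hjX : C j * X ∈ reesAlgebra I := by
      rw [C_mul_X_eq_monomial]; exact reesAlgebra.monomial_mem.mpr (by simpa using hJI hj)
    have hm' : monomial t m ∈ reesAlgebra I := reesAlgebra.monomial_mem.mpr hm
    refine ⟨⟨C j * X, hjX⟩ * ⟨monomial t m, hm'⟩,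
      Ideal.mul_mem_right _ _ (Ideal.subset_span ⟨j, hj, Or.inr rfl⟩), ?_⟩
    change C j * X * monomial t m = _
    rw [C_mul_X_eq_monomial, monomial_mul_monomial, add_comm 1 t]
  · rw [map_add]; exact add_mem hx hy

lemma mem_aluffiIdeal_of_coeff_mem (hJI : J ≤ I) {w : reesAlgebra I}
    (h0 : (w : R[X]).coeff 0 ∈ J) (hsucc : ∀ t, (w : R[X]).coeff (t + 1) ∈ J * I ^ t) :
    w ∈ aluffiIdeal I J := by
  rw [← coe_mem_aluffiSubmodule_iff, as_sum_support (w : R[X])]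
  refine Submodule.sum_mem _ fun i _ => ?_
  rcases i with _ | t
  · exact C_mem_aluffiSubmodule h0
  · exact monomial_succ_mem_aluffiSubmodule hJI (hsucc t)

lemma algebraMap_mul_mem_aluffiIdeal (hJI : J ≤ I) {k : ℕ}
    (hk : ∀ t, I ^ k * (J ⊓ I ^ t) ≤ J * I ^ t) {a : R} (ha : a ∈ I ^ k)
    {y : reesAlgebra I} (hy : y ∈ tildeIdeal I J) :
    algebraMap R (reesAlgebra I) a * y ∈ aluffiIdeal I J := by
  rw [mem_tildeIdeal_iff] at hy
  refine mem_aluffiIdeal_of_coeff_mem hJI ?_ fun t => ?_ <;> rw [coeff_algebraMap_mul]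
  · exact J.mul_mem_left a (hy 0)
  · have hcoeff : (y : R[X]).coeff (t + 1) ∈ I ^ (t + 1) := (mem_reesAlgebra_iff I _).mp y.2 _
    exact Ideal.mul_mono_right (Ideal.pow_le_pow_right t.le_succ)
      (hk (t + 1) (Ideal.mul_mem_mul ha ⟨hy (t + 1), hcoeff⟩))

lemma mem_tildeIdeal_of_algebraMap_mul_mem {b : R}
    (hb : Ideal.Quotient.mk J b ∈ nonZeroDivisors (R ⧸ J)) {y : reesAlgebra I}
    (h : algebraMap R (reesAlgebra I) b * y ∈ tildeIdeal I J) : y ∈ tildeIdeal I J := by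
  rw [mem_tildeIdeal_iff] at h ⊢
  intro n
  rw [← Ideal.Quotient.eq_zero_iff_mem]
  refine mem_nonZeroDivisors_iff_right.mp hb _ ?_
  rw [← map_mul, mul_comm, Ideal.Quotient.eq_zero_iff_mem, ← coeff_algebraMap_mul]
  exact h n

end

theorem valabrega_valla_is_zeroth_local_cohomology_general [IsNoetherianRing R]
    (I J : Ideal R) (hJI : J ≤ I)
    (hreg : ∃ b ∈ I, Ideal.Quotient.mk J b ∈ nonZeroDivisors (R ⧸ J)) :
    (∀ x : AluffiAlgebra I J,
      (x ∈ (tildeIdeal I J).map (Ideal.Quotient.mk (aluffiIdeal I J)) ↔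
        ∃ n : ℕ, ∀ a ∈ I ^ n, algebraMap R (AluffiAlgebra I J) a * x = 0)) ∧
    ∃ k : ℕ, ∀ t : ℕ, 1 ≤ t → I ^ k * (J ⊓ I ^ t) ≤ J * I ^ (t - 1) := by
  obtain ⟨k, hk⟩ := Ideal.exists_pow_mul_inf_pow_le_mul_pow I J
  obtain ⟨b, hbI, hb⟩ := hreg
  refine ⟨fun x => ?_, k, fun t _ =>
    (hk t).trans (Ideal.mul_mono_right (Ideal.pow_le_pow_right (Nat.sub_le t 1)))⟩
  obtain ⟨y, rfl⟩ := Ideal.Quotient.mk_surjective x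
  simp only [← Ideal.Quotient.mk_algebraMap, ← map_mul, Ideal.Quotient.eq_zero_iff_mem,
    Ideal.mem_quotient_iff_mem aluffiIdeal_le_tildeIdeal]
  refine ⟨fun hy => ⟨k, fun a ha => algebraMap_mul_mem_aluffiIdeal hJI hk ha hy⟩, ?_⟩
  rintro ⟨n, hn⟩
  have hbn : Ideal.Quotient.mk J (b ^ n) ∈ nonZeroDivisors (R ⧸ J) := by
    rw [map_pow]; exact pow_mem hb n
  exact mem_tildeIdeal_of_algebraMap_mul_mem hbn
    (aluffiIdeal_le_tildeIdeal (hn _ (Ideal.pow_mem_pow hbI n)))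

/-- if `I/J` contains a regular element of `R/J`, the Valabrega–Valla
module `𝒱𝒱_{J⊆I}` — the image of `J̃` in the Aluffi algebra, i.e. the kernel of
`𝒜 ↠ Rees_{R/J}(I/J)` — equals the zeroth local cohomology `H⁰_{I/J}(𝒜)`, that is, the
set of elements of `𝒜` killed by a power of `I/J`.  In particular there is a `k ≥ 0`
with `I^k·(J ∩ I^t) ⊆ J·I^{t-1}` for every `t ≥ 1`. -/
theorem valabrega_valla_is_zeroth_local_cohomology [IsNoetherianRing R]
    (I J : Ideal R) (hJI : J ≤ I) (hI : I ≠ ⊤)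
    (hreg : ∃ b ∈ I, Ideal.Quotient.mk J b ∈ nonZeroDivisors (R ⧸ J)) :
    (∀ x : AluffiAlgebra I J,
      (x ∈ (tildeIdeal I J).map (Ideal.Quotient.mk (aluffiIdeal I J)) ↔
        ∃ n : ℕ, ∀ a ∈ I ^ n, algebraMap R (AluffiAlgebra I J) a * x = 0)) ∧
    ∃ k : ℕ, ∀ t : ℕ, 1 ≤ t → I ^ k * (J ⊓ I ^ t) ≤ J * I ^ (t - 1) :=
  valabrega_valla_is_zeroth_local_cohomology_general I J hJI hreg
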